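/- arXiv:1509.08562 — 7 statements merged into one kernel-verified Lean document; each statement's English description precedes it below -/
import Mathlib

section
/- Let ∼ be an equivalence relation on a finite set Y, let C be a channel from a finite set X to Y, let π be a prior on X, and let Obs₁ : Y → Z₁ and Obs₂ : Y → Z₂ be two deterministic ∼-observers. Then the observed mutual information coincides: I(π, C·Obs₁) = I(π, C·Obs₂). -/
open scoped Classical BigOperators

noncomputable section

/-- A (row-stochastic) channel matrix. -/
def IsChannel {X Y : Type*} [Fintype Y] (C : X → Y → ℝ) : Prop :=
  (∀ x y, 0 ≤ C x y) ∧ ∀ x, ∑ y, C x y = 1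

/-- A prior (probability distribution). -/
def IsPrior {X : Type*} [Fintype X] (π : X → ℝ) : Prop :=
  (∀ x, 0 ≤ π x) ∧ ∑ x, π x = 1

/-- Cascade composition of channels (matrix product). -/
def cascade {X Y Z : Type*} [Fintype Y] (C : X → Y → ℝ) (D : Y → Z → ℝ) : X → Z → ℝ :=
  fun x z => ∑ y, C x y * D y z

/-- Mutual information (base-2), with `0`-probability terms taken to be `0`. -/
def MI {X Y : Type*} [Fintype X] [Fintype Y] (π : X → ℝ) (C : X → Y → ℝ) : ℝ :=
  ∑ x, ∑ y, if π x * C x y = 0 then 0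
    else π x * C x y * Real.logb 2 (C x y / ∑ x', π x' * C x' y)

/-- Prior vulnerability. -/
def Vprior {X : Type*} [Fintype X] [Nonempty X] (π : X → ℝ) : ℝ :=
  Finset.univ.sup' Finset.univ_nonempty π

/-- Posterior vulnerability. -/
def Vpost {X Y : Type*} [Fintype X] [Nonempty X] [Fintype Y]
    (π : X → ℝ) (C : X → Y → ℝ) : ℝ :=
  ∑ y, Finset.univ.sup' Finset.univ_nonempty (fun x => π x * C x y)

/-- Min-entropy leakage. -/
def MEL {X Y : Type*} [Fintype X] [Nonempty X] [Fintype Y]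
    (π : X → ℝ) (C : X → Y → ℝ) : ℝ :=
  Real.logb 2 (Vpost π C) - Real.logb 2 (Vprior π)

/-- Min-capacity: supremum of min-entropy leakage over all priors. -/
def MinCap {X Y : Type*} [Fintype X] [Nonempty X] [Fintype Y] (C : X → Y → ℝ) : ℝ :=
  sSup {l : ℝ | ∃ π : X → ℝ, IsPrior π ∧ l = MEL π C}

/-- A deterministic observer: every matrix entry is `0` or `1`. -/
def IsDeterministic {Y Z : Type*} (Obs : Y → Z → ℝ) : Prop :=
  ∀ y z, Obs y z = 0 ∨ Obs y z = 1

/-- A `∼`-observer for the relation `r`. -/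
def IsSimObserver {Y Z : Type*} (r : Y → Y → Prop) (Obs : Y → Z → ℝ) : Prop :=
  ∀ y₁ y₂, r y₁ y₂ ↔ ∀ z, Obs y₁ z = Obs y₂ z

private lemma det_channel_exists_fun {Y Z : Type*} [Fintype Z]
    (Obs : Y → Z → ℝ) (hO : IsChannel Obs) (hd : IsDeterministic Obs) :
    ∃ f : Y → Z, ∀ y z, Obs y z = if z = f y then 1 else 0 := by
  have key : ∀ y, ∃ z, ∀ z', Obs y z' = if z' = z then 1 else 0 := by
    intro y
    have h1 : ∃ z, Obs y z = 1 := by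
      by_contra hcon
      push_neg at hcon
      have h0 : ∀ z, Obs y z = 0 := fun z => (hd y z).resolve_right (hcon z)
      have := hO.2 y
      simp [h0] at this
    obtain ⟨z, hz⟩ := h1
    refine ⟨z, fun z' => ?_⟩
    by_cases hzz : z' = z
    · simp [hzz, hz]
    · simp only [hzz, if_false]
      rcases hd y z' with h | h
      · exact h
      · exfalso
        have hle : ∑ w ∈ ({z, z'} : Finset Z), Obs y w ≤ ∑ w, Obs y w :=
          Finset.sum_le_sum_of_subset_of_nonneg (Finset.subset_univ _)
            (fun w _ _ => hO.1 y w)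
        rw [Finset.sum_pair (Ne.symm hzz)] at hle
        rw [hO.2 y, hz, h] at hle
        linarith
  choose f hf using key
  exact ⟨f, fun y z => hf y z⟩

private def MIT {X Y : Type*} [Fintype X] [Fintype Y]
    (π : X → ℝ) (C : X → Y → ℝ) (A : Finset Y) : ℝ :=
  ∑ x, (if π x * (∑ y ∈ A, C x y) = 0 then 0
    else π x * (∑ y ∈ A, C x y) *
      Real.logb 2 ((∑ y ∈ A, C x y) / ∑ x', π x' * (∑ y ∈ A, C x' y)))

private lemma MIT_empty {X Y : Type*} [Fintype X] [Fintype Y]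
    (π : X → ℝ) (C : X → Y → ℝ) : MIT π C ∅ = 0 := by
  simp [MIT]

private lemma MI_eq_sum_MIT {X Y Z : Type*} [Fintype X] [Fintype Y] [Fintype Z]
    (π : X → ℝ) (C : X → Y → ℝ) (f : Y → Z) :
    MI π (fun x z => ∑ y ∈ Finset.univ.filter (fun y => f y = z), C x y)
      = ∑ z, MIT π C (Finset.univ.filter (fun y => f y = z)) := by
  rw [MI, Finset.sum_comm]
  rfl

private lemma MI_fiber_eq {X Y Z W : Type*} [Fintype X] [Fintype Y] [Fintype Z] [Fintype W]
    (π : X → ℝ) (C : X → Y → ℝ) (f : Y → Z) (g : Y → W)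
    (h : ∀ y y', f y = f y' ↔ g y = g y') :
    MI π (fun x z => ∑ y ∈ Finset.univ.filter (fun y => f y = z), C x y)
      = MI π (fun x w => ∑ y ∈ Finset.univ.filter (fun y => g y = w), C x y) := by
  classical
  rw [MI_eq_sum_MIT, MI_eq_sum_MIT]
  rw [← Finset.sum_subset (Finset.subset_univ (Finset.univ.image f))
      (by
        intro z _ hz
        have hemp : Finset.univ.filter (fun y => f y = z) = ∅ := by
          apply Finset.filter_eq_empty_iff.mpr
          intro y _ hy
          exact hz (Finset.mem_image.mpr ⟨y, Finset.mem_univ y, hy⟩)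
        rw [hemp, MIT_empty]),
      ← Finset.sum_subset (Finset.subset_univ (Finset.univ.image g))
      (by
        intro w _ hw
        have hemp : Finset.univ.filter (fun y => g y = w) = ∅ := by
          apply Finset.filter_eq_empty_iff.mpr
          intro y _ hy
          exact hw (Finset.mem_image.mpr ⟨y, Finset.mem_univ y, hy⟩)
        rw [hemp, MIT_empty])]
  have hsel : ∀ z ∈ Finset.univ.image f, ∃ y, f y = z := by
    intro z hz
    obtain ⟨y, -, hy⟩ := Finset.mem_image.mp hz
    exact ⟨y, hy⟩
  choose sel hselspec using hsel
  refine Finset.sum_bij (fun z hz => g (sel z hz)) ?_ ?_ ?_ ?_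
  · intro z hz
    exact Finset.mem_image.mpr ⟨sel z hz, Finset.mem_univ _, rfl⟩
  · intro z₁ hz₁ z₂ hz₂ heq
    rw [← hselspec z₁ hz₁, ← hselspec z₂ hz₂]
    exact (h _ _).mpr heq
  · intro w hw
    obtain ⟨y, -, hy⟩ := Finset.mem_image.mp hw
    have hmem : f y ∈ Finset.univ.image f :=
      Finset.mem_image.mpr ⟨y, Finset.mem_univ y, rfl⟩
    exact ⟨f y, hmem, by rw [← hy]; exact (h _ _).mp (hselspec (f y) hmem)⟩
  · intro z hz
    congr 1
    ext y'
    simp only [Finset.mem_filter, Finset.mem_univ, true_and]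
    constructor
    · intro hy
      exact (h _ _).mp (hy.trans (hselspec z hz).symm)
    · intro hy
      exact ((h _ _).mpr hy).trans (hselspec z hz)

private lemma sim_iff_fun_eq {Y Z : Type*} (r : Y → Y → Prop)
    (Obs : Y → Z → ℝ) (f : Y → Z)
    (hf : ∀ y z, Obs y z = if z = f y then 1 else 0)
    (hs : IsSimObserver r Obs) (y y' : Y) : r y y' ↔ f y = f y' := by
  rw [hs y y']
  constructor
  · intro hall
    by_contra hne
    have hthis := hall (f y)
    rw [hf, hf, if_pos rfl, if_neg hne] at hthis
    exact one_ne_zero hthis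
  · intro heq z
    rw [hf, hf, heq]

private lemma cascade_det {X Y Z : Type*} [Fintype Y] [Fintype Z]
    (C : X → Y → ℝ) (Obs : Y → Z → ℝ) (f : Y → Z)
    (hf : ∀ y z, Obs y z = if z = f y then 1 else 0) :
    cascade C Obs = fun x z => ∑ y ∈ Finset.univ.filter (fun y => f y = z), C x y := by
  classical
  funext x z
  rw [cascade, Finset.sum_filter]
  refine Finset.sum_congr rfl fun y _ => ?_
  rw [hf y z]
  by_cases hh : f y = z
  · rw [if_pos hh.symm, if_pos hh, mul_one]
  · rw [if_neg (fun hzz => hh hzz.symm), if_neg hh, mul_zero]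

/-- two deterministic `∼`-observers yield the same observed
mutual information. -/
theorem observed_MI_unique_det_sim_observer
    {X Y Z₁ Z₂ : Type*} [Fintype X] [Fintype Y] [Fintype Z₁] [Fintype Z₂]
    (r : Y → Y → Prop) (hr : Equivalence r)
    (C : X → Y → ℝ) (hC : IsChannel C)
    (π : X → ℝ) (hπ : IsPrior π)
    (Obs₁ : Y → Z₁ → ℝ) (Obs₂ : Y → Z₂ → ℝ)
    (hO₁ : IsChannel Obs₁) (hO₂ : IsChannel Obs₂)
    (hd₁ : IsDeterministic Obs₁) (hd₂ : IsDeterministic Obs₂)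
    (hs₁ : IsSimObserver r Obs₁) (hs₂ : IsSimObserver r Obs₂) :
    MI π (cascade C Obs₁) = MI π (cascade C Obs₂) := by
  obtain ⟨f₁, hf₁⟩ := det_channel_exists_fun Obs₁ hO₁ hd₁
  obtain ⟨f₂, hf₂⟩ := det_channel_exists_fun Obs₂ hO₂ hd₂
  have hff : ∀ y y', f₁ y = f₁ y' ↔ f₂ y = f₂ y' := by
    intro y y'
    rw [← sim_iff_fun_eq r Obs₁ f₁ hf₁ hs₁ y y', sim_iff_fun_eq r Obs₂ f₂ hf₂ hs₂ y y']
  rw [cascade_det C Obs₁ f₁ hf₁, cascade_det C Obs₂ f₂ hf₂]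
  exact MI_fiber_eq π C f₁ f₂ hff
end
end

section
/- Let ∼ be an equivalence relation on a finite set Y, let C be a channel from a finite set X to Y, let π be a prior on X, and let Obs₁ : Y → Z₁ and Obs₂ : Y → Z₂ be two deterministic ∼-observers. Then the observed min-entropy leakage coincides: L(π, C·Obs₁) = L(π, C·Obs₂); equivalently, the posterior vulnerabilities satisfy V(π, C·Obs₁) = V(π, C·Obs₂). -/
open scoped Classical BigOperators

noncomputable section

/-! A deterministic observer is the channel of a function `f : Y → Z`, and being a
`∼`-observer says that the kernel of `f` is `∼`. Relabelling the outputs injectively only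
permutes the nonzero columns of `C · Obs` and adds zero columns, so the posterior vulnerability
depends on the kernel alone: both observers give that of the quotient map `Y → Y/∼`. -/

def detChannel {Y Z : Type*} (f : Y → Z) : Y → Z → ℝ :=
  fun y z => if f y = z then 1 else 0

lemma detChannel_congr_iff {Y Z : Type*} (f : Y → Z) (y y' : Y) :
    (∀ z, detChannel f y z = detChannel f y' z) ↔ f y = f y' := by
  refine ⟨fun h => ?_, fun h z => by simp only [detChannel, h]⟩
  simpa [detChannel, eq_comm] using h (f y)

lemma isSimObserver_detChannel_iff {Y Z : Type*} (r : Y → Y → Prop) (f : Y → Z) :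
    IsSimObserver r (detChannel f) ↔ ∀ y y', r y y' ↔ f y = f y' := by
  simp only [IsSimObserver, detChannel_congr_iff]

lemma IsDeterministic.existsUnique_eq_one {Y Z : Type*} [Fintype Z] {Obs : Y → Z → ℝ}
    (hd : IsDeterministic Obs) (hO : IsChannel Obs) (y : Y) : ∃! z, Obs y z = 1 := by
  have hcard : (Finset.univ.filter fun z => Obs y z = 1).card = 1 := by
    have hrow : ∑ z, Obs y z = ∑ z, if Obs y z = 1 then (1 : ℝ) else 0 :=
      Finset.sum_congr rfl fun z _ => by rcases hd y z with h | h <;> simp [h]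
    rw [hO.2 y, ← Finset.sum_filter, Finset.sum_const, nsmul_one] at hrow
    exact_mod_cast hrow.symm
  obtain ⟨z, hz⟩ := Finset.card_eq_one.mp hcard
  refine ⟨z, ?_, fun z' hz' => ?_⟩
  · simpa using (Finset.ext_iff.mp hz z).2 (Finset.mem_singleton_self z)
  · simpa using (Finset.ext_iff.mp hz z').1 (by simpa using hz')

lemma IsDeterministic.exists_eq_detChannel {Y Z : Type*} [Fintype Z] {Obs : Y → Z → ℝ}
    (hd : IsDeterministic Obs) (hO : IsChannel Obs) : ∃ f : Y → Z, Obs = detChannel f := by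
  choose f hf hunique using hd.existsUnique_eq_one hO
  refine ⟨f, funext₂ fun y z => ?_⟩
  rcases hd y z with h | h
  · have : f y ≠ z := by rintro rfl; linarith [hf y]
    simp [detChannel, h, this]
  · simp [detChannel, h, (hunique y z h).symm]

lemma cascade_detChannel_comp_apply {X Y Z Z' : Type*} [Fintype Y] (C : X → Y → ℝ)
    (f : Y → Z) {g : Z → Z'} (hg : g.Injective) (x : X) (z : Z) :
    cascade C (detChannel (g ∘ f)) x (g z) = cascade C (detChannel f) x z := by
  simp only [cascade, detChannel, Function.comp_apply, hg.eq_iff]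

lemma cascade_detChannel_of_notMem_range {X Y Z : Type*} [Fintype Y] (C : X → Y → ℝ)
    (f : Y → Z) {z : Z} (hz : z ∉ Set.range f) (x : X) : cascade C (detChannel f) x z = 0 := by
  refine Finset.sum_eq_zero fun y _ => ?_
  simp [detChannel, show f y ≠ z from fun h => hz ⟨y, h⟩]

lemma Vpost_cascade_detChannel_comp {X Y Z Z' : Type*} [Fintype X] [Nonempty X] [Fintype Y]
    [Fintype Z] [Fintype Z'] (π : X → ℝ) (C : X → Y → ℝ) (f : Y → Z) {g : Z → Z'}
    (hg : g.Injective) :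
    Vpost π (cascade C (detChannel (g ∘ f))) = Vpost π (cascade C (detChannel f)) := by
  refine (Fintype.sum_of_injective g hg _ _ (fun z' hz' => ?_) fun z => ?_).symm
  · have hz'f : z' ∉ Set.range (g ∘ f) := fun ⟨y, hy⟩ => hz' ⟨f y, hy⟩
    simp only [cascade_detChannel_of_notMem_range C _ hz'f, mul_zero, Finset.sup'_const]
  · simp only [cascade_detChannel_comp_apply C f hg]

lemma Vpost_cascade_detChannel_eq_quotient {X Y Z : Type*} [Fintype X] [Nonempty X]
    [Fintype Y] [Fintype Z] (π : X → ℝ) (C : X → Y → ℝ) (s : Setoid Y) (f : Y → Z)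
    (hf : ∀ y y', s y y' ↔ f y = f y') :
    Vpost π (cascade C (detChannel f)) = Vpost π (cascade C (detChannel (Quotient.mk s))) :=
  Vpost_cascade_detChannel_comp π C (Quotient.mk s)
    (g := Quotient.lift f fun y y' h => (hf y y').1 h)
    (Quotient.ind₂ fun y y' h => Quotient.sound ((hf y y').2 h))

lemma Vpost_cascade_detChannel_eq_of_eq_iff {X Y Z₁ Z₂ : Type*} [Fintype X] [Nonempty X]
    [Fintype Y] [Fintype Z₁] [Fintype Z₂] (π : X → ℝ) (C : X → Y → ℝ)
    {f₁ : Y → Z₁} {f₂ : Y → Z₂} (h : ∀ y y', f₁ y = f₁ y' ↔ f₂ y = f₂ y') :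
    Vpost π (cascade C (detChannel f₁)) = Vpost π (cascade C (detChannel f₂)) := by
  rw [Vpost_cascade_detChannel_eq_quotient π C (Setoid.ker f₁) f₁ fun _ _ => Setoid.ker_def,
    Vpost_cascade_detChannel_eq_quotient π C (Setoid.ker f₁) f₂ fun y y' =>
      Setoid.ker_def.trans (h y y')]

theorem observed_MEL_unique_det_sim_observer_general
    {X Y Z₁ Z₂ : Type*} [Fintype X] [Nonempty X] [Fintype Y] [Fintype Z₁] [Fintype Z₂]
    (r : Y → Y → Prop)
    (C : X → Y → ℝ)
    (π : X → ℝ)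
    (Obs₁ : Y → Z₁ → ℝ) (Obs₂ : Y → Z₂ → ℝ)
    (hO₁ : IsChannel Obs₁) (hO₂ : IsChannel Obs₂)
    (hd₁ : IsDeterministic Obs₁) (hd₂ : IsDeterministic Obs₂)
    (hs₁ : IsSimObserver r Obs₁) (hs₂ : IsSimObserver r Obs₂) :
    MEL π (cascade C Obs₁) = MEL π (cascade C Obs₂) ∧
      Vpost π (cascade C Obs₁) = Vpost π (cascade C Obs₂) := by
  obtain ⟨f₁, rfl⟩ := hd₁.exists_eq_detChannel hO₁
  obtain ⟨f₂, rfl⟩ := hd₂.exists_eq_detChannel hO₂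
  rw [isSimObserver_detChannel_iff] at hs₁ hs₂
  have hV := Vpost_cascade_detChannel_eq_of_eq_iff π C fun y y' =>
    (hs₁ y y').symm.trans (hs₂ y y')
  exact ⟨by rw [MEL, MEL, hV], hV⟩

/-- two deterministic `∼`-observers yield the same observed
min-entropy leakage and the same posterior vulnerability. -/
theorem observed_MEL_unique_det_sim_observer
    {X Y Z₁ Z₂ : Type*} [Fintype X] [Nonempty X] [Fintype Y] [Fintype Z₁] [Fintype Z₂]
    (r : Y → Y → Prop) (hr : Equivalence r)
    (C : X → Y → ℝ) (hC : IsChannel C)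
    (π : X → ℝ) (hπ : IsPrior π)
    (Obs₁ : Y → Z₁ → ℝ) (Obs₂ : Y → Z₂ → ℝ)
    (hO₁ : IsChannel Obs₁) (hO₂ : IsChannel Obs₂)
    (hd₁ : IsDeterministic Obs₁) (hd₂ : IsDeterministic Obs₂)
    (hs₁ : IsSimObserver r Obs₁) (hs₂ : IsSimObserver r Obs₂) :
    MEL π (cascade C Obs₁) = MEL π (cascade C Obs₂) ∧
      Vpost π (cascade C Obs₁) = Vpost π (cascade C Obs₂) :=
  observed_MEL_unique_det_sim_observer_general r C π Obs₁ Obs₂ hO₁ hO₂ hd₁ hd₂ hs₁ hs₂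
end
end

section
/- Let C be a channel from a finite set X to a finite set Y, let π be a prior on X, and let Obs : Y → Z be any observer. Then 0 ≤ L(π, C·Obs) ≤ L(π, C); equivalently, the vulnerabilities satisfy V(π) ≤ V(π, C·Obs) ≤ V(π, C). -/
open scoped Classical BigOperators

noncomputable section

lemma Vprior_le_Vpost {X Y : Type*} [Fintype X] [Nonempty X] [Fintype Y]
    (π : X → ℝ) (hπ : ∀ x, 0 ≤ π x) (D : X → Y → ℝ) (hD : IsChannel D) :
    Vprior π ≤ Vpost π D := by
  obtain ⟨x₀, -, hx₀⟩ := Finset.exists_mem_eq_sup' Finset.univ_nonempty π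
  have : Vprior π = ∑ y, π x₀ * D x₀ y := by
    rw [Vprior, hx₀, ← Finset.mul_sum, hD.2 x₀, mul_one]
  rw [this, Vpost]
  exact Finset.sum_le_sum fun y _ =>
    Finset.le_sup' (fun x => π x * D x y) (Finset.mem_univ x₀)

lemma Vpost_cascade_le {X Y Z : Type*} [Fintype X] [Nonempty X] [Fintype Y] [Fintype Z]
    (π : X → ℝ) (hπ : ∀ x, 0 ≤ π x) (C : X → Y → ℝ) (hC : IsChannel C)
    (Obs : Y → Z → ℝ) (hObs : IsChannel Obs) :
    Vpost π (cascade C Obs) ≤ Vpost π C := by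
  have key : ∀ z, Finset.univ.sup' Finset.univ_nonempty (fun x => π x * cascade C Obs x z)
      ≤ ∑ y, (Finset.univ.sup' Finset.univ_nonempty (fun x => π x * C x y)) * Obs y z := by
    intro z
    apply Finset.sup'_le
    intro x _
    rw [cascade, Finset.mul_sum]
    apply Finset.sum_le_sum
    intro y _
    rw [← mul_assoc]
    exact mul_le_mul_of_nonneg_right
      (Finset.le_sup' (fun x => π x * C x y) (Finset.mem_univ x)) (hObs.1 y z)
  calc Vpost π (cascade C Obs)
      ≤ ∑ z, ∑ y, (Finset.univ.sup' Finset.univ_nonempty (fun x => π x * C x y)) * Obs y z :=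
        Finset.sum_le_sum fun z _ => key z
    _ = ∑ y, (Finset.univ.sup' Finset.univ_nonempty (fun x => π x * C x y)) * ∑ z, Obs y z := by
        rw [Finset.sum_comm]; simp [Finset.mul_sum]
    _ = Vpost π C := by simp [hObs.2, Vpost]

lemma Vprior_pos {X : Type*} [Fintype X] [Nonempty X] (π : X → ℝ) (hπ : IsPrior π) :
    0 < Vprior π := by
  by_contra h
  push_neg at h
  have : ∀ x ∈ Finset.univ, π x ≤ (0:ℝ) := fun x _ =>
    le_trans (Finset.le_sup' π (Finset.mem_univ x)) h
  have : (∑ x, π x) ≤ 0 := Finset.sum_nonpos this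
  rw [hπ.2] at this; linarith

/-- the observed min-entropy leakage is nonnegative and at most the
min-entropy leakage of the channel itself; equivalently the vulnerabilities
satisfy `V(π) ≤ V(π, C·Obs) ≤ V(π, C)`. -/
theorem observed_MEL_bounds
    {X Y Z : Type*} [Fintype X] [Nonempty X] [Fintype Y] [Fintype Z]
    (C : X → Y → ℝ) (hC : IsChannel C)
    (π : X → ℝ) (hπ : IsPrior π)
    (Obs : Y → Z → ℝ) (hObs : IsChannel Obs) :
    (0 ≤ MEL π (cascade C Obs) ∧ MEL π (cascade C Obs) ≤ MEL π C) ∧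
      (Vprior π ≤ Vpost π (cascade C Obs) ∧ Vpost π (cascade C Obs) ≤ Vpost π C) := by
  have hcasc : IsChannel (cascade C Obs) := by
    constructor
    · intro x z
      exact Finset.sum_nonneg fun y _ => mul_nonneg (hC.1 x y) (hObs.1 y z)
    · intro x
      unfold cascade
      rw [Finset.sum_comm]
      simp only [← Finset.mul_sum, hObs.2]
      simpa using hC.2 x
  have h1 : Vprior π ≤ Vpost π (cascade C Obs) := Vprior_le_Vpost π hπ.1 _ hcasc
  have h2 : Vpost π (cascade C Obs) ≤ Vpost π C := Vpost_cascade_le π hπ.1 C hC Obs hObs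
  have hp : 0 < Vprior π := Vprior_pos π hπ
  have hpc : 0 < Vpost π (cascade C Obs) := lt_of_lt_of_le hp h1
  refine ⟨⟨?_, ?_⟩, h1, h2⟩
  · rw [MEL, sub_nonneg]
    exact Real.logb_le_logb_of_le (by norm_num) hp h1
  · rw [MEL, MEL]
    have := Real.logb_le_logb_of_le (b := 2) (by norm_num) hpc h2
    linarith
end
end

section
/- Let C be a channel from a finite set X to a finite set Y, let π be a prior on X, and let Obs : Y → Z be a perfect observer (a deterministic observer with pairwise distinct rows, i.e. a deterministic ∼-observer for ∼ the equality relation on Y). Then observation does not alter the leakage: I(π, C·Obs) = I(π, C) and L(π, C·Obs) = L(π, C). -/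
open scoped Classical BigOperators

noncomputable section

/-- a perfect observer (deterministic with pairwise distinct rows)
does not alter the mutual information nor the min-entropy leakage. -/
theorem perfect_observer_preserves_leakage
    {X Y Z : Type*} [Fintype X] [Nonempty X] [Fintype Y] [Fintype Z]
    (C : X → Y → ℝ) (hC : IsChannel C)
    (π : X → ℝ) (hπ : IsPrior π)
    (Obs : Y → Z → ℝ) (hObs : IsChannel Obs)
    (hdet : IsDeterministic Obs)
    (hperf : ∀ y₁ y₂ : Y, y₁ ≠ y₂ → ∃ z, Obs y₁ z ≠ Obs y₂ z) :
    MI π (cascade C Obs) = MI π C ∧ MEL π (cascade C Obs) = MEL π C := by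
  obtain ⟨hC0, hC1⟩ := hC
  obtain ⟨hO0, hO1⟩ := hObs
  -- each row of Obs has an entry equal to 1
  have hex : ∀ y : Y, ∃ z, Obs y z = 1 := by
    intro y
    by_contra h
    push_neg at h
    have h0 : ∀ z, Obs y z = 0 := fun z => (hdet y z).resolve_right (h z)
    have hs := hO1 y
    rw [Finset.sum_congr rfl (fun z _ => h0 z)] at hs
    simp at hs
  set f : Y → Z := fun y => (hex y).choose with hfdef
  have hf : ∀ y, Obs y (f y) = 1 := fun y => (hex y).choose_spec
  have hO's : ∀ y z, z ≠ f y → Obs y z = 0 := by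
    intro y z hz
    by_contra h
    have h1 : Obs y z = 1 := (hdet y z).resolve_left h
    have hle := Finset.sum_le_sum_of_subset_of_nonneg
      (Finset.subset_univ ({f y, z} : Finset Z)) (fun i _ _ => hO0 y i)
    rw [Finset.sum_pair (Ne.symm hz)] at hle
    rw [hO1 y, hf y, h1] at hle
    linarith
  have hObsIf : ∀ y z, Obs y z = if z = f y then 1 else 0 := by
    intro y z
    by_cases hz : z = f y
    · simp [hz, hf]
    · simp [hz, hO's y z hz]
  have hf_inj : Function.Injective f := by
    intro y₁ y₂ h
    by_contra hne
    obtain ⟨z, hz⟩ := hperf y₁ y₂ hne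
    apply hz
    rw [hObsIf, hObsIf, h]
  have hcas : ∀ x y, cascade C Obs x (f y) = C x y := by
    intro x y
    unfold cascade
    rw [Fintype.sum_eq_single y]
    · rw [hf y]; ring
    · intro y' hy'
      rw [hO's y' (f y) (fun h => hy' (hf_inj h.symm))]
      ring
  have hcas0 : ∀ x z, z ∉ Finset.image f Finset.univ → cascade C Obs x z = 0 := by
    intro x z hz
    unfold cascade
    apply Finset.sum_eq_zero
    intro y _
    have : z ≠ f y := by
      intro h
      exact hz (Finset.mem_image.2 ⟨y, Finset.mem_univ y, h.symm⟩)
    rw [hO's y z this]; ring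
  have key : ∀ (g : Z → ℝ), (∀ z ∉ Finset.image f Finset.univ, g z = 0) →
      ∑ z, g z = ∑ y, g (f y) := by
    intro g hg
    rw [← Finset.sum_subset (Finset.subset_univ _) (fun z _ hz => hg z hz)]
    exact Finset.sum_image (fun a _ b _ h => hf_inj h)
  constructor
  · unfold MI
    apply Finset.sum_congr rfl
    intro x _
    rw [key _ (by intro z hz; simp [hcas0 x z hz])]
    apply Finset.sum_congr rfl
    intro y _
    rw [hcas x y]
    congr 2
    · rw [Finset.sum_congr rfl (fun x' _ => by rw [hcas x' y])]
  · have hVpost : Vpost π (cascade C Obs) = Vpost π C := by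
      unfold Vpost
      rw [key _ (by
          intro z hz
          have h0 : (fun x => π x * cascade C Obs x z) = fun _ => (0:ℝ) := by
            funext x; rw [hcas0 x z hz]; ring
          rw [h0, Finset.sup'_const])]
      apply Finset.sum_congr rfl
      intro y _
      apply Finset.sup'_congr _ rfl
      intro x _
      rw [hcas x y]
    unfold MEL
    rw [hVpost]
end
end

section
/- Let ∼ be an equivalence relation on a finite set Y and let Obs₁ : Y → Z and Obs₂ : Y → Z be two ∼-observers with the same finite view set Z. If Obs₂ is deterministic, then Obs₁ is composition-refined by Obs₂: there exists a channel R : Z → Z (row-stochastic matrix) such that Obs₁ = Obs₂ · R. -/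
open scoped Classical BigOperators

noncomputable section

/-- any `∼`-observer is composition-refined by a deterministic
`∼`-observer with the same view set. -/
theorem sim_observer_refined_by_deterministic
    {Y Z : Type*} [Fintype Y] [Fintype Z]
    (r : Y → Y → Prop) (hr : Equivalence r)
    (Obs₁ : Y → Z → ℝ) (Obs₂ : Y → Z → ℝ)
    (hO₁ : IsChannel Obs₁) (hO₂ : IsChannel Obs₂)
    (hs₁ : IsSimObserver r Obs₁) (hs₂ : IsSimObserver r Obs₂)
    (hd₂ : IsDeterministic Obs₂) :
    ∃ R : Z → Z → ℝ, IsChannel R ∧ Obs₁ = cascade Obs₂ R := by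
  classical
  have hex : ∀ y, ∃ z, Obs₂ y z = 1 := by
    intro y
    by_contra h
    push_neg at h
    have hs : ∑ z, Obs₂ y z = 1 := hO₂.2 y
    have hz : ∀ z, Obs₂ y z = 0 := fun z => (hd₂ y z).resolve_right (h z)
    simp [hz] at hs
  let f : Y → Z := fun y => Classical.choose (hex y)
  have hrow : ∀ y z, Obs₂ y z = if z = f y then 1 else 0 := by
    intro y z
    have h1 : Obs₂ y (f y) = 1 := Classical.choose_spec (hex y)
    by_cases hz : z = f y
    · simp [hz, h1]
    · simp only [hz, if_false]
      have hsum : ∑ z', Obs₂ y z' = 1 := hO₂.2 y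
      have hrest : ∑ z' ∈ Finset.univ.erase (f y), Obs₂ y z' = 0 := by
        have hadd := Finset.add_sum_erase Finset.univ (Obs₂ y) (Finset.mem_univ (f y))
        linarith
      exact (Finset.sum_eq_zero_iff_of_nonneg
        (fun z' _ => hO₂.1 y z')).mp hrest z (Finset.mem_erase.mpr ⟨hz, Finset.mem_univ z⟩)
  have hfeq : ∀ y₁ y₂, f y₁ = f y₂ → Obs₁ y₁ = Obs₁ y₂ := by
    intro y₁ y₂ hf
    have hr2 : ∀ z, Obs₂ y₁ z = Obs₂ y₂ z := by
      intro z; rw [hrow, hrow, hf]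
    have := (hs₁ y₁ y₂).mp ((hs₂ y₁ y₂).mpr hr2)
    funext z; exact this z
  refine ⟨fun z w => if h : ∃ y, f y = z then Obs₁ (Classical.choose h) w
      else if w = z then 1 else 0, ⟨?_, ?_⟩, ?_⟩
  · intro z w
    by_cases h : ∃ y, f y = z
    · simp only [h, dif_pos]; exact hO₁.1 _ w
    · simp only [h, dif_neg, not_false_iff]
      split <;> norm_num
  · intro z
    by_cases h : ∃ y, f y = z
    · simp only [h, dif_pos]; exact hO₁.2 _
    · simp [h]
  · funext y z
    have hk : ∃ y', f y' = f y := ⟨y, rfl⟩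
    have : Obs₁ (Classical.choose hk) = Obs₁ y := hfeq _ _ (Classical.choose_spec hk)
    simp only [cascade]
    have hterm : ∀ z', Obs₂ y z' * (if h : ∃ y'', f y'' = z' then Obs₁ (Classical.choose h) z
        else if z = z' then 1 else 0)
        = if z' = f y then Obs₁ y z else 0 := by
      intro z'
      rw [hrow]
      by_cases hz : z' = f y
      · subst hz
        rw [if_pos rfl, dif_pos hk, this, one_mul, if_pos rfl]
      · simp [hz]
    rw [Finset.sum_congr rfl (fun z' _ => hterm z')]
    simp
end
end

section
/- Let C be a channel from a finite set X to a finite set Y, let π be a prior on X, and let Obs₁ : Y → Z₁ and Obs₂ : Y → Z₂ be observers such that Obs₁ is composition-refined by Obs₂ (there exists a channel R : Z₂ → Z₁ with Obs₁ = Obs₂ · R). Then the observed mutual information satisfies I(π, C·Obs₁) ≤ I(π, C·Obs₂). -/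
open scoped Classical BigOperators

noncomputable section

/-!
Since `Obs₁ = Obs₂ · R`, the channel `C · Obs₁` is `D · R` with `D = C · Obs₂`. Mutual information
is the `π`-weighted sum over inputs `x` of the relative entropy between the row `π x • D x` of the
joint distribution and `π x` times the output marginal, and post-processing both vectors by the
stochastic matrix `R` cannot increase relative entropy: this is the log-sum inequality applied to
each output column of `R`.
-/

open Finset Matrix

namespace Real

lemma sub_le_mul_log_div {a c : ℝ} (ha : 0 ≤ a) (hc : 0 ≤ c) (hca : c = 0 → a = 0) :
    a - c ≤ a * log (a / c) := by
  rcases ha.eq_or_lt with rfl | ha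
  · simpa using hc
  have hc : 0 < c := hc.lt_of_ne (Ne.symm fun h => ha.ne' (hca h))
  have := one_sub_inv_le_log_of_pos (div_pos ha hc)
  calc a - c = a * (1 - (a / c)⁻¹) := by field_simp
    _ ≤ a * log (a / c) := by gcongr

/-- The log-sum inequality. -/
theorem sum_mul_log_div_sum_le {ι : Type*} (s : Finset ι) {a b : ι → ℝ}
    (ha : ∀ i ∈ s, 0 ≤ a i) (hb : ∀ i ∈ s, 0 ≤ b i) (hba : ∀ i ∈ s, b i = 0 → a i = 0) :
    (∑ i ∈ s, a i) * log ((∑ i ∈ s, a i) / ∑ i ∈ s, b i) ≤ ∑ i ∈ s, a i * log (a i / b i) := by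
  rcases (sum_nonneg ha).eq_or_lt with hA | hA
  · rw [← hA, zero_mul]
    refine sum_nonneg fun i hi => ?_
    rw [(sum_eq_zero_iff_of_nonneg ha).1 hA.symm i hi, zero_mul]
  have hB : 0 < ∑ i ∈ s, b i := by
    refine (sum_nonneg hb).lt_of_ne fun hB => hA.ne ?_
    exact (sum_eq_zero fun i hi => hba i hi ((sum_eq_zero_iff_of_nonneg hb).1 hB.symm i hi)).symm
  set r := (∑ i ∈ s, a i) / ∑ i ∈ s, b i with hr
  have hr_pos : 0 < r := div_pos hA hB
  -- Compare `a` with `b` rescaled to the same total mass.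
  have key : ∀ i ∈ s, a i - b i * r ≤ a i * log (a i / b i) - a i * log r := by
    intro i hi
    have hle := sub_le_mul_log_div (ha i hi) (mul_nonneg (hb i hi) hr_pos.le) fun h =>
      hba i hi ((mul_eq_zero.1 h).resolve_right hr_pos.ne')
    rcases (ha i hi).eq_or_lt with h0 | hpos
    · rw [← h0] at hle ⊢
      simpa using hle
    have hbi : 0 < b i := (hb i hi).lt_of_ne fun h => hpos.ne' (hba i hi h.symm)
    rwa [div_mul_eq_div_div, log_div (by positivity) hr_pos.ne', mul_sub] at hle
  have := sum_le_sum key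
  rw [sum_sub_distrib, sum_sub_distrib, ← sum_mul, ← sum_mul, hr, mul_div_cancel₀ _ hB.ne',
    sub_self] at this
  linarith

end Real

/-- Relative entropy in nats. Meaningful only when `Q z = 0` forces `P z = 0`: otherwise the
junk value `log (P z / 0) = 0` enters. -/
def relEntropy {Z : Type*} [Fintype Z] (P Q : Z → ℝ) : ℝ :=
  ∑ z, P z * Real.log (P z / Q z)

lemma mul_mul_log_div_mul_right (p q : ℝ) {r : ℝ} (hr : 0 ≤ r) :
    p * r * Real.log (p * r / (q * r)) = r * (p * Real.log (p / q)) := by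
  rcases hr.eq_or_lt with rfl | hr
  · simp
  rw [mul_div_mul_right _ _ hr.ne']
  ring

theorem relEntropy_vecMul_le {Z₁ Z₂ : Type*} [Fintype Z₁] [Fintype Z₂] {P Q : Z₂ → ℝ}
    {R : Z₂ → Z₁ → ℝ} (hP : ∀ z, 0 ≤ P z) (hQ : ∀ z, 0 ≤ Q z) (hQP : ∀ z, Q z = 0 → P z = 0)
    (hR : IsChannel R) :
    relEntropy (P ᵥ* R) (Q ᵥ* R) ≤ relEntropy P Q :=
  calc relEntropy (P ᵥ* R) (Q ᵥ* R)
      = ∑ z₁, (∑ z₂, P z₂ * R z₂ z₁) *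
          Real.log ((∑ z₂, P z₂ * R z₂ z₁) / ∑ z₂, Q z₂ * R z₂ z₁) := rfl
    _ ≤ ∑ z₁, ∑ z₂, P z₂ * R z₂ z₁ * Real.log (P z₂ * R z₂ z₁ / (Q z₂ * R z₂ z₁)) :=
      sum_le_sum fun z₁ _ => Real.sum_mul_log_div_sum_le _
        (fun z₂ _ => mul_nonneg (hP z₂) (hR.1 z₂ z₁))
        (fun z₂ _ => mul_nonneg (hQ z₂) (hR.1 z₂ z₁))
        fun z₂ _ h => by rcases mul_eq_zero.1 h with h | h <;> simp [hQP z₂, h]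
    _ = ∑ z₂, (∑ z₁, R z₂ z₁) * (P z₂ * Real.log (P z₂ / Q z₂)) := by
      simp only [mul_mul_log_div_mul_right _ _ (hR.1 _ _), sum_mul]
      exact sum_comm
    _ = relEntropy P Q := by simp only [hR.2, one_mul, relEntropy]

lemma MI_eq_sum_relEntropy {X Y : Type*} [Fintype X] [Fintype Y] (π : X → ℝ) (C : X → Y → ℝ) :
    MI π C = (∑ x, relEntropy (π x • C x) (π x • (π ᵥ* C))) / Real.log 2 := by
  simp only [MI, relEntropy, sum_div]
  refine sum_congr rfl fun x _ => sum_congr rfl fun y _ => ?_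
  simp only [Pi.smul_apply, smul_eq_mul]
  split_ifs with h
  · simp [h]
  · rw [mul_div_mul_left _ _ (left_ne_zero_of_mul h), Real.logb, mul_div_assoc]
    rfl

lemma cascade_assoc {W X Y Z : Type*} [Fintype X] [Fintype Y] (C : W → X → ℝ) (D : X → Y → ℝ)
    (E : Y → Z → ℝ) : cascade C (cascade D E) = cascade (cascade C D) E :=
  (Matrix.mul_assoc (l := W) (m := X) (n := Y) (o := Z) C D E).symm

lemma cascade_nonneg {X Y Z : Type*} [Fintype Y] {C : X → Y → ℝ} {D : Y → Z → ℝ}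
    (hC : ∀ x y, 0 ≤ C x y) (hD : ∀ y z, 0 ≤ D y z) (x : X) (z : Z) : 0 ≤ cascade C D x z :=
  sum_nonneg fun y _ => mul_nonneg (hC x y) (hD y z)

theorem MI_cascade_le {X Y Z : Type*} [Fintype X] [Fintype Y] [Fintype Z] {π : X → ℝ}
    {D : X → Y → ℝ} {R : Y → Z → ℝ} (hπ : ∀ x, 0 ≤ π x) (hD : ∀ x y, 0 ≤ D x y)
    (hR : IsChannel R) : MI π (cascade D R) ≤ MI π D := by
  rw [MI_eq_sum_relEntropy, MI_eq_sum_relEntropy]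
  refine div_le_div_of_nonneg_right (sum_le_sum fun x _ => ?_) (Real.log_nonneg one_le_two)
  have hmarg : ∀ y, 0 ≤ (π ᵥ* D) y := fun y =>
    sum_nonneg fun x' _ => mul_nonneg (hπ x') (hD x' y)
  have hac : ∀ y, π x * (π ᵥ* D) y = 0 → π x * D x y = 0 := fun y h => by
    rcases mul_eq_zero.1 h with h | h
    · simp [h]
    · exact (sum_eq_zero_iff_of_nonneg fun x' _ => mul_nonneg (hπ x') (hD x' y)).1 h x
        (mem_univ x)
  have hrow : π x • cascade D R x = (π x • D x) ᵥ* R := (smul_vecMul _ _ _).symm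
  have hmarg_cascade : π x • (π ᵥ* cascade D R) = (π x • (π ᵥ* D)) ᵥ* R :=
    (congrArg (π x • ·) (vecMul_vecMul π D R).symm).trans (smul_vecMul _ _ _).symm
  rw [hrow, hmarg_cascade]
  exact relEntropy_vecMul_le (fun y => mul_nonneg (hπ x) (hD x y))
    (fun y => mul_nonneg (hπ x) (hmarg y)) hac hR

theorem refined_observer_MI_le_general
    {X Y Z₁ Z₂ : Type*} [Fintype X] [Fintype Y] [Fintype Z₁] [Fintype Z₂]
    (C : X → Y → ℝ) (hC : IsChannel C)
    (π : X → ℝ) (hπ : IsPrior π)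
    (Obs₁ : Y → Z₁ → ℝ) (Obs₂ : Y → Z₂ → ℝ)
    (hO₂ : IsChannel Obs₂)
    (href : ∃ R : Z₂ → Z₁ → ℝ, IsChannel R ∧ Obs₁ = cascade Obs₂ R) :
    MI π (cascade C Obs₁) ≤ MI π (cascade C Obs₂) := by
  obtain ⟨R, hR, rfl⟩ := href
  rw [cascade_assoc]
  exact MI_cascade_le hπ.1 (cascade_nonneg hC.1 hO₂.1) hR

/-- a composition-refined observer observes no more mutual
information. -/
theorem refined_observer_MI_le
    {X Y Z₁ Z₂ : Type*} [Fintype X] [Fintype Y] [Fintype Z₁] [Fintype Z₂]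
    (C : X → Y → ℝ) (hC : IsChannel C)
    (π : X → ℝ) (hπ : IsPrior π)
    (Obs₁ : Y → Z₁ → ℝ) (Obs₂ : Y → Z₂ → ℝ)
    (hO₁ : IsChannel Obs₁) (hO₂ : IsChannel Obs₂)
    (href : ∃ R : Z₂ → Z₁ → ℝ, IsChannel R ∧ Obs₁ = cascade Obs₂ R) :
    MI π (cascade C Obs₁) ≤ MI π (cascade C Obs₂) :=
  refined_observer_MI_le_general C hC π hπ Obs₁ Obs₂ hO₂ href
end
end

section
/- Let C be a channel from a finite set X to a finite set Y and let Obs : Y → Z be any observer. Then the observed min-capacity satisfies 0 ≤ MC(C·Obs) ≤ MC(C), with MC(C·Obs) = 0 when Obs is a unit observer (Z a singleton) and MC(C·Obs) = MC(C) when Obs is a perfect observer (deterministic with pairwise distinct rows). -/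
open scoped Classical BigOperators

noncomputable section

section Aux

variable {X Y Z : Type*} [Fintype X] [Nonempty X] [Fintype Y] [Fintype Z]

lemma vprior_pos {π : X → ℝ} (hπ : IsPrior π) : 0 < Vprior π := by
  obtain ⟨x, hx⟩ : ∃ x, 0 < π x := by
    by_contra h
    push_neg at h
    have : (∑ x, π x) ≤ 0 := Finset.sum_nonpos (fun x _ => h x)
    rw [hπ.2] at this; linarith
  exact lt_of_lt_of_le hx (Finset.le_sup' π (Finset.mem_univ x))

lemma vprior_le_vpost {π : X → ℝ} {C : X → Y → ℝ} (hπ : IsPrior π) (hC : IsChannel C) :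
    Vprior π ≤ Vpost π C := by
  unfold Vprior Vpost
  apply Finset.sup'_le
  intro x _
  calc π x = ∑ y, π x * C x y := by rw [← Finset.mul_sum, hC.2 x, mul_one]
    _ ≤ _ := Finset.sum_le_sum fun y _ =>
        Finset.le_sup' (fun x => π x * C x y) (Finset.mem_univ x)

lemma vpost_pos {π : X → ℝ} {C : X → Y → ℝ} (hπ : IsPrior π) (hC : IsChannel C) :
    0 < Vpost π C := lt_of_lt_of_le (vprior_pos hπ) (vprior_le_vpost hπ hC)

lemma vpost_le_one {π : X → ℝ} {C : X → Y → ℝ} (hπ : IsPrior π) (hC : IsChannel C) :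
    Vpost π C ≤ 1 := by
  unfold Vpost
  calc ∑ y, Finset.univ.sup' Finset.univ_nonempty (fun x => π x * C x y)
      ≤ ∑ y, ∑ x, π x * C x y := by
        apply Finset.sum_le_sum
        intro y _
        apply Finset.sup'_le
        intro x _
        exact Finset.single_le_sum (fun x' _ => mul_nonneg (hπ.1 x') (hC.1 x' y))
          (Finset.mem_univ x)
    _ = ∑ x, π x * ∑ y, C x y := by rw [Finset.sum_comm]; simp [Finset.mul_sum]
    _ = 1 := by simp only [hC.2, mul_one, hπ.2]

lemma vprior_inv_card {π : X → ℝ} (hπ : IsPrior π) :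
    ((Fintype.card X : ℝ))⁻¹ ≤ Vprior π := by
  have hcard : (0 : ℝ) < Fintype.card X := by
    exact_mod_cast Fintype.card_pos
  rw [inv_le_iff_one_le_mul₀ hcard]
  calc (1 : ℝ) = ∑ x, π x := hπ.2.symm
    _ ≤ ∑ _x : X, Vprior π :=
        Finset.sum_le_sum fun x _ => Finset.le_sup' π (Finset.mem_univ x)
    _ = Vprior π * (Fintype.card X : ℝ) := by
        simp [Finset.sum_const, nsmul_eq_mul, Finset.card_univ, mul_comm]

lemma mel_nonneg {π : X → ℝ} {C : X → Y → ℝ} (hπ : IsPrior π) (hC : IsChannel C) :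
    0 ≤ MEL π C := by
  unfold MEL
  have := Real.logb_le_logb_of_le (by norm_num : (1:ℝ) < 2)
    (vprior_pos hπ) (vprior_le_vpost hπ hC)
  linarith

lemma mel_le_log_card {π : X → ℝ} {C : X → Y → ℝ} (hπ : IsPrior π) (hC : IsChannel C) :
    MEL π C ≤ Real.logb 2 (Fintype.card X) := by
  unfold MEL
  have h1 : Real.logb 2 (Vpost π C) ≤ 0 :=
    Real.logb_nonpos (by norm_num) (le_of_lt (vpost_pos hπ hC)) (vpost_le_one hπ hC)
  have h2 : Real.logb 2 ((Fintype.card X : ℝ))⁻¹ ≤ Real.logb 2 (Vprior π) :=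
    Real.logb_le_logb_of_le (by norm_num) (by positivity) (vprior_inv_card hπ)
  rw [Real.logb_inv] at h2
  linarith

/-- The uniform prior. -/
lemma uniform_isPrior : IsPrior (fun _ : X => ((Fintype.card X : ℝ))⁻¹) := by
  constructor
  · intro x; positivity
  · have hcard : (Fintype.card X : ℝ) ≠ 0 := by
      exact_mod_cast Fintype.card_ne_zero
    simp [Finset.sum_const, Finset.card_univ, nsmul_eq_mul, mul_inv_cancel₀ hcard]

lemma melSet_nonempty (C : X → Y → ℝ) :
    {l : ℝ | ∃ π : X → ℝ, IsPrior π ∧ l = MEL π C}.Nonempty :=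
  ⟨MEL (fun _ : X => ((Fintype.card X : ℝ))⁻¹) C, _, uniform_isPrior, rfl⟩

lemma melSet_bddAbove (C : X → Y → ℝ) (hC : IsChannel C) :
    BddAbove {l : ℝ | ∃ π : X → ℝ, IsPrior π ∧ l = MEL π C} := by
  refine ⟨Real.logb 2 (Fintype.card X), ?_⟩
  rintro l ⟨π, hπ, rfl⟩
  exact mel_le_log_card hπ hC

lemma cascade_isChannel {C : X → Y → ℝ} {D : Y → Z → ℝ}
    (hC : IsChannel C) (hD : IsChannel D) : IsChannel (cascade C D) := by
  constructor
  · intro x z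
    exact Finset.sum_nonneg fun y _ => mul_nonneg (hC.1 x y) (hD.1 y z)
  · intro x
    unfold cascade
    rw [Finset.sum_comm]
    calc ∑ y, ∑ z, C x y * D y z = ∑ y, C x y * ∑ z, D y z := by
          simp [Finset.mul_sum]
      _ = 1 := by simp only [hD.2, mul_one, hC.2]

lemma minCap_nonneg (C : X → Y → ℝ) (hC : IsChannel C) : 0 ≤ MinCap C := by
  refine le_trans (mel_nonneg (uniform_isPrior (X := X)) hC) ?_
  exact le_csSup (melSet_bddAbove C hC) ⟨_, uniform_isPrior, rfl⟩

lemma vpost_cascade_le {π : X → ℝ} {C : X → Y → ℝ} {Obs : Y → Z → ℝ}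
    (hπ : IsPrior π) (hC : IsChannel C) (hObs : IsChannel Obs) :
    Vpost π (cascade C Obs) ≤ Vpost π C := by
  unfold Vpost cascade
  calc ∑ z, Finset.univ.sup' Finset.univ_nonempty (fun x => π x * ∑ y, C x y * Obs y z)
      ≤ ∑ z, ∑ y, (Finset.univ.sup' Finset.univ_nonempty (fun x => π x * C x y)) * Obs y z := by
        apply Finset.sum_le_sum
        intro z _
        apply Finset.sup'_le
        intro x _
        calc π x * ∑ y, C x y * Obs y z = ∑ y, (π x * C x y) * Obs y z := by
              rw [Finset.mul_sum]; ring_nf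
          _ ≤ _ := Finset.sum_le_sum fun y _ =>
              mul_le_mul_of_nonneg_right
                (Finset.le_sup' (fun x => π x * C x y) (Finset.mem_univ x)) (hObs.1 y z)
    _ = ∑ y, (Finset.univ.sup' Finset.univ_nonempty (fun x => π x * C x y)) * ∑ z, Obs y z := by
        rw [Finset.sum_comm]; simp [Finset.mul_sum]
    _ = _ := by simp only [hObs.2, mul_one]

end Aux

/-- bounds on the observed min-capacity, with equality to `0` for
unit observers and to `MC(C)` for perfect observers. -/
theorem observed_minCap_bounds
    {X Y Z : Type*} [Fintype X] [Nonempty X] [Fintype Y] [Fintype Z]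
    (C : X → Y → ℝ) (hC : IsChannel C)
    (Obs : Y → Z → ℝ) (hObs : IsChannel Obs) :
    (0 ≤ MinCap (cascade C Obs) ∧ MinCap (cascade C Obs) ≤ MinCap C) ∧
      ((∀ z z' : Z, z = z') → MinCap (cascade C Obs) = 0) ∧
      ((IsDeterministic Obs ∧ ∀ y₁ y₂ : Y, y₁ ≠ y₂ → ∃ z, Obs y₁ z ≠ Obs y₂ z) →
        MinCap (cascade C Obs) = MinCap C) := by
  have hcas : IsChannel (cascade C Obs) := cascade_isChannel hC hObs
  have hle : MinCap (cascade C Obs) ≤ MinCap C := by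
    apply csSup_le (melSet_nonempty _)
    rintro l ⟨π, hπ, rfl⟩
    have h1 : MEL π (cascade C Obs) ≤ MEL π C := by
      unfold MEL
      have := Real.logb_le_logb_of_le (by norm_num : (1:ℝ) < 2)
        (vpost_pos hπ hcas) (vpost_cascade_le hπ hC hObs)
      linarith
    exact h1.trans (le_csSup (melSet_bddAbove C hC) ⟨π, hπ, rfl⟩)
  refine ⟨⟨minCap_nonneg _ hcas, hle⟩, ?_, ?_⟩
  · -- unit observer
    intro hZ
    have hYne : Nonempty Y := by
      by_contra h
      rw [not_nonempty_iff] at h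
      have := hC.2 (Classical.arbitrary X)
      simp [Finset.univ_eq_empty] at this
    have hZne : Nonempty Z := by
      by_contra h
      rw [not_nonempty_iff] at h
      have := hObs.2 (Classical.arbitrary Y)
      simp [Finset.univ_eq_empty] at this
    obtain ⟨z0⟩ := hZne
    have huniv : (Finset.univ : Finset Z) = {z0} := by
      ext z; simp [hZ z z0]
    have hObs1 : ∀ y z, Obs y z = 1 := by
      intro y z
      have h1 := hObs.2 y
      rw [huniv, Finset.sum_singleton] at h1
      rw [hZ z z0]; exact h1
    have hcasc1 : ∀ x z, cascade C Obs x z = 1 := by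
      intro x z
      unfold cascade
      simp only [hObs1, mul_one]
      exact hC.2 x
    have hmel : ∀ π : X → ℝ, MEL π (cascade C Obs) = 0 := by
      intro π
      unfold MEL Vpost
      simp only [hcasc1, mul_one]
      rw [huniv, Finset.sum_singleton]
      unfold Vprior
      exact sub_self _
    apply le_antisymm
    · apply csSup_le (melSet_nonempty _)
      rintro l ⟨π, hπ, rfl⟩
      rw [hmel π]
    · exact minCap_nonneg _ hcas
  · -- perfect observer
    rintro ⟨hdet, hperf⟩
    have hexists : ∀ y, ∃ z, Obs y z = 1 := by
      intro y
      by_contra h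
      push_neg at h
      have h0 : ∀ z, Obs y z = 0 := fun z => (hdet y z).resolve_right (h z)
      have hs := hObs.2 y
      rw [Finset.sum_eq_zero (fun z _ => h0 z)] at hs
      norm_num at hs
    choose f hf using hexists
    have huniq : ∀ y z, Obs y z = 1 → z = f y := by
      intro y z h1
      by_contra hne
      have h2 : (2:ℝ) ≤ ∑ z', Obs y z' := by
        have h3 := Finset.sum_le_sum_of_subset_of_nonneg
          (Finset.subset_univ ({z, f y} : Finset Z)) (fun z' _ _ => hObs.1 y z')
        rw [Finset.sum_pair hne, h1, hf y] at h3
        linarith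
      rw [hObs.2 y] at h2; linarith
    have hObsite : ∀ y z, Obs y z = if z = f y then 1 else 0 := by
      intro y z
      rcases hdet y z with h | h
      · rw [h]
        symm; rw [if_neg]
        intro hz
        rw [hz, hf y] at h
        norm_num at h
      · rw [h, if_pos (huniq y z h)]
    have hinj : Function.Injective f := by
      intro y1 y2 hfe
      by_contra hne
      obtain ⟨z, hz⟩ := hperf y1 y2 hne
      exact hz (by rw [hObsite, hObsite, hfe])
    have h1 : ∀ x y, cascade C Obs x (f y) = C x y := by
      intro x y
      unfold cascade
      rw [Finset.sum_eq_single y]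
      · rw [hObsite, if_pos rfl, mul_one]
      · intro y' _ hne
        rw [hObsite, if_neg, mul_zero]
        intro h
        exact hne (hinj h.symm)
      · simp
    have h2 : ∀ x z, z ∉ Finset.univ.image f → cascade C Obs x z = 0 := by
      intro x z hz
      unfold cascade
      apply Finset.sum_eq_zero
      intro y _
      rw [hObsite, if_neg, mul_zero]
      intro h
      exact hz (Finset.mem_image.mpr ⟨y, Finset.mem_univ y, h.symm⟩)
    have hvp : ∀ π : X → ℝ, Vpost π (cascade C Obs) = Vpost π C := by
      intro π
      unfold Vpost
      calc ∑ z, Finset.univ.sup' Finset.univ_nonempty (fun x => π x * cascade C Obs x z)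
          = ∑ z ∈ Finset.univ.image f,
              Finset.univ.sup' Finset.univ_nonempty (fun x => π x * cascade C Obs x z) := by
            symm
            apply Finset.sum_subset (Finset.subset_univ _)
            intro z _ hz
            have hzero : (fun x => π x * cascade C Obs x z) = fun _ => (0:ℝ) :=
              funext fun x => by rw [h2 x z hz, mul_zero]
            rw [hzero, Finset.sup'_const]
        _ = ∑ y, Finset.univ.sup' Finset.univ_nonempty (fun x => π x * cascade C Obs x (f y)) :=
            Finset.sum_image (fun y _ y' _ h => hinj h)
        _ = ∑ y, Finset.univ.sup' Finset.univ_nonempty (fun x => π x * C x y) := by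
            apply Finset.sum_congr rfl
            intro y _
            congr 1
            funext x
            rw [h1]
    have hmel : ∀ π : X → ℝ, MEL π (cascade C Obs) = MEL π C := by
      intro π
      unfold MEL
      rw [hvp π]
    unfold MinCap
    congr 1
    ext l
    simp only [Set.mem_setOf_eq, hmel]
end
end
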